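/- Mehler's formula: for real x, y and complex z with |z| < 1, e^{-(x²+y²)/2} Σ_{n=0}^∞ (1/n!)(z/2)ⁿ Hₙ(x) Hₙ(y) = (1-z²)^{-1/2} exp[(4xyz - (x²+y²)(1+z²))/(2(1-z²))], where Hₙ are the physicists' Hermite polynomials. -/

import Mathlib

open Real Complex

/-- Physicists' Hermite polynomials `Hₙ(x) = (-1)ⁿ e^{x²} (dⁿ/dxⁿ) e^{-x²}`. -/
noncomputable def hermiteH (n : ℕ) (x : ℝ) : ℝ :=
  (-1)^n * Real.exp (x^2) * iteratedDeriv n (fun y => Real.exp (-y^2)) x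

/-!
The Gaussian is its own Fourier transform, `√π e^{-x²} = ∫ e^{-t² + 2ixt} dt`, and differentiating
`n` times under the integral sign gives `√π Hₙ(x) = (-1)ⁿ e^{x²} ∫ (2it)ⁿ e^{-t² + 2ixt} dt`.
Substituting this for `Hₙ(x)` and `Hₙ(y)`, the `n`-th term of the series becomes
`∫∫ (-2zst)ⁿ / n! · e^{-s² + 2ixs} e^{-t² + 2iyt}`, and summing under the integral replaces
`(-2zst)ⁿ / n!` by `e^{-2zst}`. The interchange is dominated convergence with the integrable bound
`e^{2|z||st| - s² - t²} ≤ e^{-(1-|z|)(s² + t²)}`, and the remaining Gaussian integral in `(s, t)`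
is evaluated by completing the square in `t`, then in `s`.
-/

open MeasureTheory

lemma ofReal_sqrt_pi_mul_self : (√π : ℂ) * √π = π := by
  exact_mod_cast Real.mul_self_sqrt pi_pos.le

lemma ofReal_cpow_one_half {r : ℝ} (hr : 0 ≤ r) : (r : ℂ) ^ (1 / 2 : ℂ) = √r := by
  rw [Real.sqrt_eq_rpow, Complex.ofReal_cpow hr]
  norm_num

lemma ofReal_div_cpow {r : ℝ} (hr : 0 < r) {w : ℂ} (hw : w ≠ 0) (harg : w.arg ≠ π) (s : ℂ) :
    ((r : ℂ) / w) ^ s = (r : ℂ) ^ s * w ^ (-s) := by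
  have hr' : (r : ℂ) ≠ 0 := by exact_mod_cast hr.ne'
  rw [div_eq_mul_inv, cpow_def_of_ne_zero (mul_ne_zero hr' (inv_ne_zero hw)),
    Complex.log_ofReal_mul hr (inv_ne_zero hw), add_mul, Complex.exp_add,
    ← cpow_def_of_ne_zero (inv_ne_zero hw), inv_cpow _ _ harg, ← cpow_neg,
    cpow_def_of_ne_zero hr', Complex.ofReal_log hr.le]

lemma re_one_sub_sq_pos {z : ℂ} (hz : ‖z‖ < 1) : 0 < (1 - z ^ 2).re := by
  have h : (z ^ 2).re < 1 := (Complex.re_le_norm _).trans_lt (by simpa [norm_pow] using hz)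
  simpa using h

lemma one_sub_sq_ne_zero {z : ℂ} (hz : ‖z‖ < 1) : 1 - z ^ 2 ≠ 0 := fun h => by
  simpa [h] using re_one_sub_sq_pos hz

lemma integrable_abs_pow_mul_exp_neg_mul_sq {b : ℝ} (hb : 0 < b) (n : ℕ) :
    Integrable fun t : ℝ => |t| ^ n * rexp (-b * t ^ 2) := by
  have h := integrable_rpow_mul_exp_neg_mul_sq hb (s := n) (by linarith [n.cast_nonneg (α := ℝ)])
  simpa [Real.rpow_natCast, abs_mul, abs_pow] using h.norm

noncomputable def gaussianWave (x t : ℝ) : ℂ := cexp (-t ^ 2 + 2 * I * x * t)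

@[fun_prop]
lemma continuous_gaussianWave (x : ℝ) : Continuous (gaussianWave x) := by
  unfold gaussianWave; fun_prop

lemma norm_gaussianWave (x t : ℝ) : ‖gaussianWave x t‖ = rexp (-t ^ 2) := by
  rw [gaussianWave, Complex.norm_exp]
  congr 1
  simp [← Complex.ofReal_pow]

lemma hasDerivAt_gaussianWave (t x : ℝ) :
    HasDerivAt (fun x => gaussianWave x t) (2 * I * t * gaussianWave x t) x := by
  have h : HasDerivAt (fun u : ℂ => -(t : ℂ) ^ 2 + 2 * I * u * t) (2 * I * t) x := by
    simpa using
      (((hasDerivAt_id (x : ℂ)).const_mul (2 * I)).mul_const (t : ℂ)).const_add (-(t : ℂ) ^ 2)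
  exact (h.cexp.comp_ofReal).congr_deriv (mul_comm _ _)

lemma integrable_pow_mul_gaussianWave (n : ℕ) (x : ℝ) :
    Integrable fun t : ℝ => (2 * I * t) ^ n * gaussianWave x t := by
  refine ((integrable_abs_pow_mul_exp_neg_mul_sq one_pos n).const_mul (2 ^ n)).mono'
    (by fun_prop) (Filter.Eventually.of_forall fun t => le_of_eq ?_)
  simp [norm_gaussianWave, mul_pow, mul_assoc]

lemma hasDerivAt_integral_pow_mul_gaussianWave (n : ℕ) (x : ℝ) :
    HasDerivAt (fun x => ∫ t, (2 * I * t) ^ n * gaussianWave x t)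
      (∫ t, (2 * I * t) ^ (n + 1) * gaussianWave x t) x := by
  refine (hasDerivAt_integral_of_dominated_loc_of_deriv_le (x₀ := x)
    (F' := fun x t => (2 * I * t) ^ (n + 1) * gaussianWave x t) Filter.univ_mem
    (Filter.Eventually.of_forall fun x => (integrable_pow_mul_gaussianWave n x).1)
    (integrable_pow_mul_gaussianWave n x) (integrable_pow_mul_gaussianWave (n + 1) x).1
    -- the norm of the integrand does not depend on `x`
    (bound := fun t => ‖(2 * I * t) ^ (n + 1) * gaussianWave 0 t‖) ?_
    (integrable_pow_mul_gaussianWave (n + 1) 0).norm ?_).2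
  · exact Filter.Eventually.of_forall fun t x _ => by simp [norm_gaussianWave]
  · refine Filter.Eventually.of_forall fun t x _ => ?_
    exact ((hasDerivAt_gaussianWave t x).const_mul ((2 * I * t) ^ n)).congr_deriv (by ring)

lemma integral_gaussianWave (x : ℝ) : ∫ t, gaussianWave x t = √π * cexp (-x ^ 2) := by
  have h (t : ℝ) : gaussianWave x t = cexp (-1 * t ^ 2 + 2 * I * x * t + 0) := by
    rw [gaussianWave]; congr 1; ring
  simp_rw [h]
  rw [integral_cexp_quadratic (by simp), neg_neg, div_one, ofReal_cpow_one_half pi_pos.le]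
  congr 2
  linear_combination (x : ℂ) ^ 2 * I_sq

lemma integral_pow_mul_gaussianWave (n : ℕ) (x : ℝ) :
    ∫ t, (2 * I * t) ^ n * gaussianWave x t = √π * iteratedDeriv n (fun y => rexp (-y ^ 2)) x := by
  induction n generalizing x with
  | zero => simp [integral_gaussianWave]
  | succ n ih =>
    have hsmooth : ContDiff ℝ ⊤ fun y : ℝ => rexp (-y ^ 2) := by fun_prop
    have hderiv : HasDerivAt (iteratedDeriv n fun y => rexp (-y ^ 2))
        (iteratedDeriv (n + 1) (fun y => rexp (-y ^ 2)) x) x := by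
      rw [iteratedDeriv_succ]
      exact ((hsmooth.differentiable_iteratedDeriv n (by simp)).differentiableAt).hasDerivAt
    refine (hasDerivAt_integral_pow_mul_gaussianWave n x).unique ?_
    simp_rw [ih]
    exact (hderiv.ofReal_comp).const_mul _

lemma integral_pow_mul_gaussianWave_eq_hermiteH (n : ℕ) (x : ℝ) :
    ∫ t, (2 * I * t) ^ n * gaussianWave x t = (-1) ^ n * √π * cexp (-x ^ 2) * hermiteH n x := by
  have hsign : ((-1 : ℂ) ^ n) * (-1) ^ n = 1 := by rw [← mul_pow]; norm_num
  have hexp : cexp (-x ^ 2) * cexp (x ^ 2) = 1 := by rw [← Complex.exp_add]; simp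
  rw [integral_pow_mul_gaussianWave, hermiteH]
  push_cast
  linear_combination (-(√π : ℂ) * (iteratedDeriv n (fun y => rexp (-y ^ 2)) x : ℝ)) *
    (hsign * cexp (-x ^ 2) * cexp (x ^ 2) + hexp)

section ExpSeries

variable {α : Type*} [MeasurableSpace α] {μ : Measure α} {g h : α → ℂ}

lemma integrable_cexp_mul (hg : AEStronglyMeasurable g μ) (hh : AEStronglyMeasurable h μ)
    (hint : Integrable (fun a => rexp ‖g a‖ * ‖h a‖) μ) :
    Integrable (fun a => cexp (g a) * h a) μ := by
  refine hint.mono' (by fun_prop) (Filter.Eventually.of_forall fun a => ?_)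
  rw [norm_mul]
  exact mul_le_mul_of_nonneg_right (Complex.norm_exp_le_exp_norm _) (norm_nonneg _)

lemma hasSum_integral_pow_div_factorial_mul (hg : AEStronglyMeasurable g μ)
    (hh : AEStronglyMeasurable h μ) (hint : Integrable (fun a => rexp ‖g a‖ * ‖h a‖) μ) :
    HasSum (fun n : ℕ => ∫ a, g a ^ n / n.factorial * h a ∂μ) (∫ a, cexp (g a) * h a ∂μ) := by
  have hexp (w : ℂ) : HasSum (fun n : ℕ => w ^ n / n.factorial) (cexp w) := by
    rw [Complex.exp_eq_exp_ℂ]; exact NormedSpace.expSeries_div_hasSum_exp w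
  have hrexp (r : ℝ) : HasSum (fun n : ℕ => r ^ n / n.factorial) (rexp r) := by
    rw [Real.exp_eq_exp_ℝ]; exact NormedSpace.expSeries_div_hasSum_exp r
  refine hasSum_integral_of_dominated_convergence (fun n a => ‖g a‖ ^ n / n.factorial * ‖h a‖)
    (fun n => by fun_prop) (fun n => Filter.Eventually.of_forall fun a => ?_)
    (Filter.Eventually.of_forall fun a => ((hrexp _).mul_right _).summable) ?_
    (Filter.Eventually.of_forall fun a => (hexp _).mul_right _)
  · simp [norm_pow]
  · simpa only [((hrexp _).mul_right _).tsum_eq] using hint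

end ExpSeries

section Mehler

variable (x y : ℝ) {z : ℂ}

lemma integrable_exp_norm_mul_norm_gaussianWave (hz : ‖z‖ < 1) :
    Integrable fun p : ℝ × ℝ =>
      rexp ‖-2 * z * p.1 * p.2‖ * ‖gaussianWave x p.1 * gaussianWave y p.2‖ := by
  have hc : 0 < 1 - ‖z‖ := by linarith
  have hdom : Integrable fun p : ℝ × ℝ =>
      rexp (-(1 - ‖z‖) * p.1 ^ 2) * rexp (-(1 - ‖z‖) * p.2 ^ 2) := by
    rw [Measure.volume_eq_prod]
    exact (integrable_exp_neg_mul_sq hc).mul_prod (integrable_exp_neg_mul_sq hc)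
  refine hdom.mono' (by fun_prop) (Filter.Eventually.of_forall fun p => ?_)
  have hnorm : ‖-2 * z * p.1 * p.2‖ = 2 * ‖z‖ * |p.1| * |p.2| := by simp
  rw [hnorm, Real.norm_of_nonneg (by positivity), norm_mul, norm_gaussianWave, norm_gaussianWave,
    ← Real.exp_add, ← Real.exp_add, ← Real.exp_add, Real.exp_le_exp]
  nlinarith [mul_nonneg (norm_nonneg z) (sq_nonneg (|p.1| - |p.2|)), sq_abs p.1, sq_abs p.2]

lemma integral_pow_div_factorial_mul_gaussianWave (n : ℕ) :
    ∫ p : ℝ × ℝ,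
        (-2 * z * p.1 * p.2) ^ n / n.factorial * (gaussianWave x p.1 * gaussianWave y p.2)
      = 1 / n.factorial * (z / 2) ^ n * hermiteH n x * hermiteH n y *
          (π * cexp (-(x ^ 2 + y ^ 2))) := by
  set c : ℂ := 1 / n.factorial * (z / 2) ^ n
  have hsplit (s t : ℝ) :
      (-2 * z * s * t) ^ n / n.factorial * (gaussianWave x s * gaussianWave y t)
        = c * ((2 * I * s) ^ n * gaussianWave x s) * ((2 * I * t) ^ n * gaussianWave y t) := by
    rw [show (-2 * z * s * t) ^ n = (z / 2) ^ n * (2 * I * s) ^ n * (2 * I * t) ^ n by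
      rw [← mul_pow, ← mul_pow]; congr 1; linear_combination (-2 * z * s * t) * I_sq]
    ring
  have hsign : ((-1 : ℂ) ^ n) * (-1) ^ n = 1 := by rw [← mul_pow]; norm_num
  simp_rw [hsplit]
  rw [Measure.volume_eq_prod,
    integral_prod_mul (fun s : ℝ => c * ((2 * I * s) ^ n * gaussianWave x s))
      (fun t : ℝ => (2 * I * t) ^ n * gaussianWave y t), integral_const_mul,
    integral_pow_mul_gaussianWave_eq_hermiteH, integral_pow_mul_gaussianWave_eq_hermiteH,
    neg_add, Complex.exp_add, ← ofReal_sqrt_pi_mul_self]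
  linear_combination (c * hermiteH n x * hermiteH n y * √π * √π * cexp (-x ^ 2) * cexp (-y ^ 2)) *
    hsign

lemma integral_cexp_mul_gaussianWave (hz : ‖z‖ < 1) :
    ∫ p : ℝ × ℝ, cexp (-2 * z * p.1 * p.2) * (gaussianWave x p.1 * gaussianWave y p.2)
      = π * (1 - z ^ 2) ^ (-(1 / 2) : ℂ) *
          cexp (-(x ^ 2 - 2 * x * y * z + y ^ 2) / (1 - z ^ 2)) := by
  have hre := re_one_sub_sq_pos hz
  have hw := one_sub_sq_ne_zero hz
  have harg : (1 - z ^ 2).arg ≠ π := fun h => by linarith [(arg_eq_pi_iff.1 h).1]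
  have hinner (s : ℝ) : ∫ t : ℝ, cexp (-2 * z * s * t) * (gaussianWave x s * gaussianWave y t)
      = √π * cexp ((z ^ 2 - 1) * s ^ 2 + (2 * I * x - 2 * I * y * z) * s + -y ^ 2) := by
    have hquad (t : ℝ) : cexp (-2 * z * s * t) * (gaussianWave x s * gaussianWave y t)
        = cexp (-1 * t ^ 2 + (2 * I * y - 2 * z * s) * t + (-s ^ 2 + 2 * I * x * s)) := by
      rw [gaussianWave, gaussianWave, ← Complex.exp_add, ← Complex.exp_add]
      congr 1; ring
    simp_rw [hquad]
    rw [integral_cexp_quadratic (by simp), neg_neg, div_one, ofReal_cpow_one_half pi_pos.le]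
    congr 2
    linear_combination (y : ℂ) ^ 2 * I_sq
  rw [Measure.volume_eq_prod, integral_prod _ (by
    rw [← Measure.volume_eq_prod]
    exact integrable_cexp_mul (by fun_prop) (by fun_prop)
      (integrable_exp_norm_mul_norm_gaussianWave x y hz))]
  simp_rw [hinner]
  rw [integral_const_mul, integral_cexp_quadratic (by simpa using hre), neg_sub,
    ofReal_div_cpow pi_pos hw harg, ofReal_cpow_one_half pi_pos.le, ← mul_assoc, ← mul_assoc,
    ofReal_sqrt_pi_mul_self]
  have hsq : (2 * I * x - 2 * I * y * z) ^ 2 = -4 * (x - y * z) ^ 2 := by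
    linear_combination (4 * (x - y * z) ^ 2) * I_sq
  have hw' : z ^ 2 - 1 ≠ 0 := fun h => hw (by linear_combination -h)
  rw [hsq]
  congr 2
  field_simp
  ring

end Mehler

theorem mehler_formula (x y : ℝ) (z : ℂ) (hz : ‖z‖ < 1) :
    Complex.exp (-((x:ℂ)^2 + (y:ℂ)^2)/2) *
      ∑' n : ℕ, (1 / (n.factorial : ℂ)) * (z/2)^n * (hermiteH n x : ℂ) * (hermiteH n y : ℂ)
    = (1 - z^2) ^ (-(1/2) : ℂ) *
      Complex.exp ((4*(x:ℂ)*(y:ℂ)*z - ((x:ℂ)^2 + (y:ℂ)^2)*(1 + z^2)) / (2*(1 - z^2))) := by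
  have hsum := hasSum_integral_pow_div_factorial_mul (μ := volume)
    (g := fun p : ℝ × ℝ => -2 * z * p.1 * p.2)
    (h := fun p => gaussianWave x p.1 * gaussianWave y p.2)
    (by fun_prop) (by fun_prop) (integrable_exp_norm_mul_norm_gaussianWave x y hz)
  simp only [integral_pow_div_factorial_mul_gaussianWave,
    integral_cexp_mul_gaussianWave x y hz] at hsum
  have hc : (π : ℂ) * cexp (-(x ^ 2 + y ^ 2)) ≠ 0 :=
    mul_ne_zero (by exact_mod_cast pi_ne_zero) (Complex.exp_ne_zero _)
  have hexp : cexp (-((x : ℂ) ^ 2 + y ^ 2) / 2) *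
        cexp (-(x ^ 2 - 2 * x * y * z + y ^ 2) / (1 - z ^ 2))
      = cexp (-(x ^ 2 + y ^ 2)) *
          cexp ((4 * x * y * z - (x ^ 2 + y ^ 2) * (1 + z ^ 2)) / (2 * (1 - z ^ 2))) := by
    have hw := one_sub_sq_ne_zero hz
    rw [← Complex.exp_add, ← Complex.exp_add]
    congr 1
    field_simp
    ring
  rw [eq_div_of_mul_eq hc (tsum_mul_right.symm.trans hsum.tsum_eq), mul_div_assoc', div_eq_iff hc]
  linear_combination (π * (1 - z ^ 2) ^ (-(1 / 2) : ℂ)) * hexp
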